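/- arXiv:0910.3085 — 7 statements merged into one kernel-verified Lean document; each statement's English description precedes it below -/
import Mathlib

section
/- Let m, k be natural numbers and let H be a hypergraph (possibly with multiple edges) of rank at most m. Then H is k-sparse if and only if there exists an orientation of H that is bounded by k. -/
/-- A hypergraph (possibly with multiple edges), given by an incidence map
`I : E → Finset V`, of rank at most `m` is `k`-sparse if and only if it has an
orientation (a map `f : E → V` with `f e ∈ I e`) that is bounded by `k`. -/
theorem k_sparse_iff_orientation_bounded {V E : Type*} (m k : ℕ) (I : E → Finset V)
    (hrank : ∀ e : E, (I e).card ≤ m) :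
    (∀ X : Finset V,
        {e : E | I e ⊆ X}.Finite ∧ {e : E | I e ⊆ X}.ncard ≤ k * X.card) ↔
      ∃ f : E → V, (∀ e : E, f e ∈ I e) ∧
        ∀ a : V, {e : E | f e = a}.Finite ∧ {e : E | f e = a}.ncard ≤ k := by
  classical
  constructor
  · intro hs
    -- Hall's theorem with slots (a, i), a ∈ V, i < k.
    set t : E → Finset (V × Fin k) := fun e => (I e) ×ˢ Finset.univ with ht
    have hall : ∀ s : Finset E, s.card ≤ (s.biUnion t).card := by
      intro s
      have hsub : (s : Set E) ⊆ {e : E | I e ⊆ s.biUnion I} := by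
        intro e he
        exact fun v hv => Finset.mem_biUnion.2 ⟨e, he, hv⟩
      have h1 : s.card ≤ k * (s.biUnion I).card := by
        calc s.card = (s : Set E).ncard := (Set.ncard_coe_finset s).symm
          _ ≤ {e : E | I e ⊆ s.biUnion I}.ncard :=
              Set.ncard_le_ncard hsub (hs (s.biUnion I)).1
          _ ≤ k * (s.biUnion I).card := (hs (s.biUnion I)).2
      have h2 : s.biUnion t = (s.biUnion I) ×ˢ Finset.univ := by
        ext ⟨a, i⟩
        simp [ht, Finset.mem_biUnion]
      rw [h2, Finset.card_product, Finset.card_univ, Fintype.card_fin, Nat.mul_comm]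
      exact h1
    obtain ⟨f, hfinj, hft⟩ := (Finset.all_card_le_biUnion_card_iff_exists_injective t).1 hall
    refine ⟨fun e => (f e).1, fun e => ?_, fun a => ?_⟩
    · have := hft e
      simp [ht, Finset.mem_product] at this
      exact this
    · -- the fiber over a injects into {a} ×ˢ univ
      have hsub : {e : E | (f e).1 = a} ⊆ f ⁻¹' (({a} ×ˢ (Finset.univ : Finset (Fin k)) : Finset (V × Fin k)) : Set (V × Fin k)) := by
        intro e he
        simp only [Set.mem_preimage, Finset.coe_product, Finset.coe_singleton]
        exact ⟨he, by simp⟩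
      have hfin : (f ⁻¹' (({a} ×ˢ (Finset.univ : Finset (Fin k)) : Finset (V × Fin k)) : Set (V × Fin k))).Finite :=
        Set.Finite.preimage hfinj.injOn (Finset.finite_toSet _)
      refine ⟨hfin.subset hsub, ?_⟩
      calc {e : E | (f e).1 = a}.ncard
          ≤ (f ⁻¹' (({a} ×ˢ (Finset.univ : Finset (Fin k)) : Finset (V × Fin k)) : Set (V × Fin k))).ncard :=
            Set.ncard_le_ncard hsub hfin
        _ ≤ (({a} ×ˢ (Finset.univ : Finset (Fin k)) : Finset (V × Fin k)) : Set (V × Fin k)).ncard := by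
            have := Set.ncard_image_of_injective
              (f ⁻¹' (({a} ×ˢ (Finset.univ : Finset (Fin k)) : Finset (V × Fin k)) : Set (V × Fin k))) hfinj
            rw [← this]
            exact Set.ncard_le_ncard (Set.image_preimage_subset _ _) (Finset.finite_toSet _)
        _ ≤ k := by
            rw [Set.ncard_coe_finset, Finset.card_product, Finset.card_singleton,
              Finset.card_univ, Fintype.card_fin, one_mul]
  · rintro ⟨f, hfI, hf⟩ X
    set T : Finset E := X.biUnion (fun a => ((hf a).1).toFinset) with hT
    have hsub : {e : E | I e ⊆ X} ⊆ (T : Set E) := by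
      intro e he
      have hfa : f e ∈ X := he (hfI e)
      simp only [hT, Finset.coe_biUnion, Set.mem_iUnion]
      exact ⟨f e, hfa, by simp [Set.Finite.mem_toFinset]⟩
    refine ⟨(T.finite_toSet).subset hsub, ?_⟩
    calc {e : E | I e ⊆ X}.ncard ≤ (T : Set E).ncard :=
          Set.ncard_le_ncard hsub T.finite_toSet
      _ = T.card := Set.ncard_coe_finset T
      _ ≤ ∑ a ∈ X, ((hf a).1).toFinset.card := Finset.card_biUnion_le
      _ ≤ ∑ a ∈ X, k := by
          refine Finset.sum_le_sum fun a _ => ?_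
          rw [← Set.ncard_eq_toFinset_card _ (hf a).1]
          exact (hf a).2
      _ = k * X.card := by rw [Finset.sum_const, smul_eq_mul, Nat.mul_comm]
end

section
/- Every finite k-sparse hypergraph (possibly with multiple edges, with finitely many vertices and finitely many edges) has an orientation that is bounded by k. -/
/-- Every finite `k`-sparse hypergraph (possibly with multiple edges) has an
orientation that is bounded by `k`. -/
theorem finite_k_sparse_has_bounded_orientation {V E : Type*} [Finite V] [Finite E]
    (k : ℕ) (I : E → Finset V)
    (hsparse : ∀ X : Finset V, {e : E | I e ⊆ X}.ncard ≤ k * X.card) :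
    ∃ f : E → V, (∀ e : E, f e ∈ I e) ∧ ∀ a : V, {e : E | f e = a}.ncard ≤ k := by
  classical
  cases nonempty_fintype E
  cases nonempty_fintype V
  set t : E → Finset (V × Fin k) := fun e => (I e) ×ˢ Finset.univ with ht
  have hall : ∀ s : Finset E, s.card ≤ (s.biUnion t).card := by
    intro s
    have hX : s.biUnion t = (s.biUnion I) ×ˢ Finset.univ := by
      ext ⟨v, i⟩
      simp [ht, Finset.mem_biUnion]
    rw [hX, Finset.card_product, Finset.card_univ, Fintype.card_fin]
    have hsub : (↑s : Set E) ⊆ {e : E | I e ⊆ s.biUnion I} := by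
      intro e he v hv
      exact Finset.mem_biUnion.2 ⟨e, he, hv⟩
    calc s.card = (↑s : Set E).ncard := (Set.ncard_coe_finset s).symm
      _ ≤ {e : E | I e ⊆ s.biUnion I}.ncard := Set.ncard_le_ncard hsub (Set.toFinite _)
      _ ≤ k * (s.biUnion I).card := hsparse _
      _ = (s.biUnion I).card * k := mul_comm _ _
  obtain ⟨f, hinj, hmem⟩ := (Finset.all_card_le_biUnion_card_iff_existsInjective' t).1 hall
  refine ⟨fun e => (f e).1, fun e => ?_, fun a => ?_⟩
  · exact (Finset.mem_product.1 (hmem e)).1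
  · calc {e : E | (f e).1 = a}.ncard ≤ (Set.univ : Set (Fin k)).ncard := by
          apply Set.ncard_le_ncard_of_injOn (fun e => (f e).2)
          · intro e _; trivial
          · intro e he e' he' h2
            apply hinj
            exact Prod.ext (he.trans he'.symm) h2
      _ = k := by simp [Set.ncard_univ]
end

section
/- For every natural number k there exists a finite set T together with an irreflexive and antisymmetric relation R on T (i.e., R(a,a) holds for no a, and R(a,b) and R(b,a) never both hold for a ≠ b) such that every k-sparse simple graph G = (V,E) admits an orientation f of G that is bounded by k and a map h : V → T with the following property: for every edge {u,v} of G with f({u,v}) = v and u ≠ v, the pair (h(u), h(v)) belongs to R. -/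
/-!
By Hall's theorem, k-sparsity lets every edge pick one of `k` slots at one of its endpoints,
which gives an orientation with in-degrees at most `k`. Colour the vertices so that the two ends
of every directed path of length two get different colours; since a vertex has at most `k²`
such predecessors, every finite set of vertices contains one with at most `2k²` such neighbours,
so greedy colouring plus compactness needs only `2k² + 1` colours. Label each vertex by its
colour and the set of colours of its in-neighbours. Along an arc `u → v`, the colour of `u` is
an in-colour of `v`, while the colour of `v` is not an in-colour of `u`: otherwise some
`w → u → v` would have `w` and `v` equally coloured, and `w = v` would be a 2-cycle.
-/

open Finset

namespace SimpleGraph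

variable {V : Type*} (G : SimpleGraph V)

theorem exists_coloring_finset_of_degenerate [DecidableEq V] [DecidableRel G.Adj] {d : ℕ}
    (hdeg : ∀ Y : Finset V, Y.Nonempty → ∃ y ∈ Y, #{x ∈ Y | G.Adj x y} ≤ d) (Y : Finset V) :
    ∃ c : V → Fin (d + 1), ∀ x ∈ Y, ∀ z ∈ Y, G.Adj x z → c x ≠ c z := by
  induction Y using Finset.strongInduction with
  | H Y ih =>
    rcases Y.eq_empty_or_nonempty with rfl | hY
    · exact ⟨0, by simp⟩
    obtain ⟨y, hy, hdy⟩ := hdeg Y hY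
    obtain ⟨c, hc⟩ := ih (Y.erase y) (erase_ssubset hy)
    obtain ⟨col, -, hcol⟩ := exists_mem_notMem_of_card_lt_card
      (s := {x ∈ Y.erase y | G.Adj x y}.image c) (t := univ) <| calc
        _ ≤ #{x ∈ Y.erase y | G.Adj x y} := card_image_le
        _ ≤ #{x ∈ Y | G.Adj x y} := card_le_card (filter_subset_filter _ (erase_subset y Y))
        _ < #(univ : Finset (Fin (d + 1))) := by simpa using Nat.lt_succ_of_le hdy
    have hfree : ∀ x ∈ Y, G.Adj x y → c x ≠ col := fun x hx hxy hcx =>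
      hcol (mem_image.mpr ⟨x, mem_filter.mpr ⟨mem_erase.mpr ⟨hxy.ne, hx⟩, hxy⟩, hcx⟩)
    refine ⟨Function.update c y col, fun x hx z hz hxz => ?_⟩
    by_cases hxy : x = y <;> by_cases hzy : z = y
    · exact absurd (hxy.trans hzy.symm) hxz.ne
    · subst hxy
      simpa [hzy] using (hfree z hz hxz.symm).symm
    · subst hzy
      simpa [hxy] using hfree x hx hxz
    · simpa [hxy, hzy] using hc x (mem_erase.mpr ⟨hxy, hx⟩) z (mem_erase.mpr ⟨hzy, hz⟩) hxz

theorem colorable_of_degenerate [DecidableRel G.Adj] {d : ℕ}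
    (hdeg : ∀ Y : Finset V, Y.Nonempty → ∃ y ∈ Y, #{x ∈ Y | G.Adj x y} ≤ d) :
    G.Colorable (d + 1) := by
  classical
  refine nonempty_hom_of_forall_finite_subgraph_hom fun G' hfin => ?_
  choose c hc using G.exists_coloring_finset_of_degenerate hdeg hfin.toFinset
  exact ⟨fun x => c x, fun {x z} hxz => hc x (by simp) z (by simp) (G'.adj_sub hxz)⟩

theorem exists_card_adj_le_of_adj_mem [DecidableEq V] [DecidableRel G.Adj] {d : ℕ}
    (P : V → Finset V) (hP : ∀ v, #(P v) ≤ d) (hadj : ∀ x y, G.Adj x y → x ∈ P y ∨ y ∈ P x)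
    (Y : Finset V) (hY : Y.Nonempty) : ∃ y ∈ Y, #{x ∈ Y | G.Adj x y} ≤ 2 * d := by
  have hsum : ∑ y ∈ Y, #{x ∈ Y | y ∈ P x} ≤ ∑ _y ∈ Y, d := calc
    ∑ y ∈ Y, #{x ∈ Y | y ∈ P x} = ∑ x ∈ Y, #{y ∈ Y | y ∈ P x} :=
      (sum_card_bipartiteAbove_eq_sum_card_bipartiteBelow _).symm
    _ ≤ ∑ _x ∈ Y, d :=
      sum_le_sum fun x _ => (card_le_card fun y hy => (mem_filter.mp hy).2).trans (hP x)
  have hle : ∀ y ∈ Y, #{x ∈ Y | G.Adj x y} ≤ d + #{x ∈ Y | y ∈ P x} := fun y _ => calc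
    _ ≤ #(P y ∪ {x ∈ Y | y ∈ P x}) := card_le_card fun x hx => by
        obtain ⟨hxY, hxy⟩ := mem_filter.mp hx
        rcases hadj x y hxy with h | h
        · exact mem_union_left _ h
        · exact mem_union_right _ (mem_filter.mpr ⟨hxY, h⟩)
    _ ≤ #(P y) + #{x ∈ Y | y ∈ P x} := card_union_le _ _
    _ ≤ d + #{x ∈ Y | y ∈ P x} := Nat.add_le_add_right (hP y) _
  refine exists_le_of_sum_le hY ?_
  calc ∑ y ∈ Y, #{x ∈ Y | G.Adj x y} ≤ ∑ y ∈ Y, (d + #{x ∈ Y | y ∈ P x}) := sum_le_sum hle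
    _ ≤ ∑ _y ∈ Y, 2 * d := by rw [sum_add_distrib, two_mul, sum_add_distrib]; gcongr

theorem colorable_of_adj_mem {d : ℕ} (P : V → Finset V) (hP : ∀ v, #(P v) ≤ d)
    (hadj : ∀ x y, G.Adj x y → x ∈ P y ∨ y ∈ P x) : G.Colorable (2 * d + 1) := by
  classical
  exact G.colorable_of_degenerate (G.exists_card_adj_le_of_adj_mem P hP hadj)

theorem card_le_mul_card_biUnion_of_sparse [DecidableEq V] {k : ℕ}
    (hsparse : ∀ X : Finset V, {e ∈ G.edgeSet | ∀ v ∈ e, v ∈ X}.ncard ≤ k * #X)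
    (s : Finset G.edgeSet) : #s ≤ k * #(s.biUnion fun e => e.val.toFinset) := by
  set X := s.biUnion fun e => e.val.toFinset
  have hsub : ((s.image Subtype.val : Finset (Sym2 V)) : Set (Sym2 V)) ⊆
      {e ∈ G.edgeSet | ∀ v ∈ e, v ∈ X} := by
    simp only [coe_image, Set.image_subset_iff]
    exact fun e he => ⟨e.2, fun v hv => mem_biUnion.mpr ⟨e, he, Sym2.mem_toFinset.mpr hv⟩⟩
  calc #s = #(s.image Subtype.val) := (card_image_of_injective s Subtype.val_injective).symm
    _ = ((s.image Subtype.val : Finset (Sym2 V)) : Set (Sym2 V)).ncard :=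
      (Set.ncard_coe_finset _).symm
    _ ≤ {e ∈ G.edgeSet | ∀ v ∈ e, v ∈ X}.ncard :=
      Set.ncard_le_ncard hsub (X.sym2.finite_toSet.subset fun e he => mem_sym2_iff.mpr he.2)
    _ ≤ k * #X := hsparse X

theorem exists_orientation_of_sparse (k : ℕ)
    (hsparse : ∀ X : Finset V, {e ∈ G.edgeSet | ∀ v ∈ e, v ∈ X}.ncard ≤ k * #X) :
    ∃ f : G.edgeSet → V, (∀ e, f e ∈ e.val) ∧
      ∀ a, {e | f e = a}.Finite ∧ {e | f e = a}.ncard ≤ k := by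
  classical
  have hall (s : Finset G.edgeSet) :
      #s ≤ #(s.biUnion fun e => e.val.toFinset ×ˢ (univ : Finset (Fin k))) := by
    have hslots : s.biUnion (fun e => e.val.toFinset ×ˢ (univ : Finset (Fin k))) =
        (s.biUnion fun e => e.val.toFinset) ×ˢ univ := by
      ext; simp
    rw [hslots, card_product, card_univ, Fintype.card_fin, mul_comm]
    exact G.card_le_mul_card_biUnion_of_sparse hsparse s
  obtain ⟨g, hg, hgmem⟩ := (all_card_le_biUnion_card_iff_exists_injective _).mp hall
  refine ⟨fun e => (g e).1, fun e => Sym2.mem_toFinset.mp (mem_product.mp (hgmem e)).1,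
    fun a => ?_⟩
  have hmaps : Set.MapsTo g {e | (g e).1 = a} (Prod.mk a '' Set.univ) :=
    fun e he => ⟨(g e).2, trivial, Prod.ext he.symm rfl⟩
  have hfin : (Prod.mk a '' (Set.univ : Set (Fin k))).Finite := Set.toFinite _
  refine ⟨hfin.of_injOn hmaps hg.injOn, ?_⟩
  calc _ ≤ (Prod.mk a '' (Set.univ : Set (Fin k))).ncard :=
        Set.ncard_le_ncard_of_injOn g hmaps hg.injOn hfin
    _ = k := by rw [Set.ncard_image_of_injective _ (Prod.mk_right_injective a)]; simp

def inNbrs (f : G.edgeSet → V) (v : V) : Set V :=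
  {u | ∃ huv : G.Adj u v, f ⟨s(u, v), G.mem_edgeSet.mpr huv⟩ = v}

theorem inNbrs_finite_and_ncard_le {f : G.edgeSet → V} {k : ℕ} {v : V}
    (hv : {e | f e = v}.Finite ∧ {e | f e = v}.ncard ≤ k) :
    (G.inNbrs f v).Finite ∧ (G.inNbrs f v).ncard ≤ k := by
  have hmaps : Set.MapsTo (fun u => s(u, v)) (G.inNbrs f v) (Subtype.val '' {e | f e = v}) :=
    fun u ⟨huv, hu⟩ => ⟨_, hu, rfl⟩
  have hinj : Set.InjOn (fun u => s(u, v)) (G.inNbrs f v) :=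
    fun _ _ _ _ h => Sym2.congr_left.mp h
  have hfin := hv.1.image Subtype.val
  refine ⟨hfin.of_injOn hmaps hinj, ?_⟩
  calc _ ≤ (Subtype.val '' {e | f e = v}).ncard :=
        Set.ncard_le_ncard_of_injOn _ hmaps hinj hfin
    _ = _ := Set.ncard_image_of_injective _ Subtype.val_injective
    _ ≤ k := hv.2

theorem notMem_inNbrs_of_mem_inNbrs {f : G.edgeSet → V} {u v : V} (h : u ∈ G.inNbrs f v) :
    v ∉ G.inNbrs f u := by
  rintro ⟨hvu, hv⟩
  obtain ⟨huv, hu⟩ := h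
  simp only [Sym2.eq_swap (a := v)] at hv
  exact huv.ne (hv.symm.trans hu)

end SimpleGraph

section InColors

variable {V α : Type*}

/-- Arcs are `x → y` for `x ∈ pred y`; two vertices are adjacent when a directed path of
length two joins them. -/
def twoStepGraph (pred : V → Finset V) : SimpleGraph V :=
  SimpleGraph.fromRel fun x z => ∃ y ∈ pred z, x ∈ pred y

theorem twoStepGraph_colorable {k : ℕ} (pred : V → Finset V) (hpred : ∀ v, #(pred v) ≤ k) :
    (twoStepGraph pred).Colorable (2 * (k * k) + 1) := by
  classical
  refine (twoStepGraph pred).colorable_of_adj_mem (fun z => (pred z).biUnion pred)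
    (fun z => (card_biUnion_le_card_mul _ _ _ fun y _ => hpred y).trans
      (Nat.mul_le_mul_right k (hpred z))) fun x z hxz => ?_
  simpa [twoStepGraph] using hxz.2

/-- Labels are pairs (colour, set of colours of the in-neighbours). -/
def inColorRel (a b : α × Finset α) : Prop := a.1 ∈ b.2 ∧ b.1 ∉ a.2

theorem inColorRel_irrefl (a : α × Finset α) : ¬ inColorRel a a :=
  fun h => h.2 h.1

theorem inColorRel_asymm {a b : α × Finset α} (h : inColorRel a b) : ¬ inColorRel b a :=
  fun h' => h.2 h'.1

theorem exists_inColorRel_hom {k : ℕ} (pred : V → Finset V) (hpred : ∀ v, #(pred v) ≤ k)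
    (hasymm : ∀ x y, x ∈ pred y → y ∉ pred x) :
    ∃ h : V → Fin (2 * (k * k) + 1) × Finset (Fin (2 * (k * k) + 1)),
      ∀ x y, x ∈ pred y → inColorRel (h x) (h y) := by
  classical
  obtain ⟨c⟩ := twoStepGraph_colorable pred hpred
  refine ⟨fun v => (c v, (pred v).image c), fun x y hxy => ⟨mem_image_of_mem c hxy, ?_⟩⟩
  intro hmem
  obtain ⟨w, hwx, hcw⟩ := mem_image.mp hmem
  have hwy : w ≠ y := by
    rintro rfl
    exact hasymm x w hxy hwx
  exact c.valid (by simpa [twoStepGraph, hwy] using Or.inl ⟨x, hxy, hwx⟩) hcw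

end InColors

/-- For every `k` there is a finite directed graph `(Fin n, R)` with irreflexive and
antisymmetric edge relation such that every `k`-sparse simple graph `G` admits an
orientation `f` bounded by `k` together with a map `h : V → Fin n` which is a
homomorphism from the directed graph `G_f` into `(Fin n, R)`. -/
theorem exists_target_for_k_sparse_orientations (k : ℕ) :
    ∃ (n : ℕ) (R : Fin n → Fin n → Prop),
      (∀ a, ¬ R a a) ∧
      (∀ a b, a ≠ b → ¬ (R a b ∧ R b a)) ∧
      ∀ (V : Type*) (G : SimpleGraph V),
        (∀ X : Finset V,
            {e ∈ G.edgeSet | ∀ v ∈ e, v ∈ X}.Finite ∧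
              {e ∈ G.edgeSet | ∀ v ∈ e, v ∈ X}.ncard ≤ k * X.card) →
        ∃ (f : G.edgeSet → V) (h : V → Fin n),
          (∀ e : G.edgeSet, f e ∈ e.val) ∧
          (∀ a : V, {e : G.edgeSet | f e = a}.Finite ∧
            {e : G.edgeSet | f e = a}.ncard ≤ k) ∧
          ∀ (u v : V) (huv : G.Adj u v),
            f ⟨s(u, v), G.mem_edgeSet.mpr huv⟩ = v → u ≠ v → R (h u) (h v) := by
  classical
  let N := 2 * (k * k) + 1
  let code := Fintype.equivFin (Fin N × Finset (Fin N))
  refine ⟨_, fun a b => inColorRel (code.symm a) (code.symm b), fun a => inColorRel_irrefl _,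
    fun a b _ hab => inColorRel_asymm hab.1 hab.2, fun V G hsparse => ?_⟩
  obtain ⟨f, hf, hfib⟩ := G.exists_orientation_of_sparse k fun X => (hsparse X).2
  have hpred v := G.inNbrs_finite_and_ncard_le (hfib v)
  obtain ⟨h, hh⟩ := exists_inColorRel_hom (fun v => (hpred v).1.toFinset)
    (fun v => by simpa [Set.ncard_eq_toFinset_card _ (hpred v).1] using (hpred v).2)
    (fun x y hxy => by simpa using G.notMem_inNbrs_of_mem_inNbrs (by simpa using hxy))
  refine ⟨f, code ∘ h, hf, hfib, fun u v huv hfuv _ => ?_⟩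
  simpa using hh u v (by simpa using ⟨huv, hfuv⟩)
end

section
/- Let k, m be natural numbers with 0 < k and 1 < m, and let H be a k-sparse hypergraph (possibly with multiple edges) of rank at most m. Then H has an orientation f that is bounded by m·k² and such that the edge relation of the directed graph O_f(H) is antisymmetric; that is, there are no two distinct vertices a, b such that both (a,b) and (b,a) are edges of O_f(H). -/
/-!
In a finite `k`-sparse hypergraph of rank at most `m` the average degree is at most `m·k`, so
some vertex `v` lies in at most `m·k` edges. Orient all of them towards `v`, delete `v` and
recurse: every edge points at its vertex deleted first, and an edge through `a` pointing at `b`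
means `b` was deleted before `a`, so no two vertices point at each other. This orients the
subhypergraph induced by any finite vertex set; an ultrafilter on the finite vertex sets
finer than `atTop` glues these orientations into one for the whole hypergraph, since each of the
required properties involves only finitely many edges.
-/

open Finset Filter

theorem Set.finite_and_ncard_le_of_forall_finset_card_le {α : Type*} {s : Set α} {n : ℕ}
    (h : ∀ t : Finset α, ↑t ⊆ s → #t ≤ n) : s.Finite ∧ s.ncard ≤ n := by
  have hs : s.Finite := by
    by_contra hs
    obtain ⟨t, hts, ht⟩ := Set.Infinite.exists_subset_card_eq hs (n + 1)
    have := h t hts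
    omega
  refine ⟨hs, ?_⟩
  rw [Set.ncard_eq_toFinset_card _ hs]
  exact h _ (by simp)

theorem Ultrafilter.exists_forall_eventually_eq {ι α β : Type*} (U : Ultrafilter ι)
    (g : ι → α → β) {s : α → Set β} (hs : ∀ a, (s a).Finite)
    (hg : ∀ a, ∀ᶠ i in U, g i a ∈ s a) :
    ∃ f : α → β, (∀ a, f a ∈ s a) ∧ ∀ a, ∀ᶠ i in U, g i a = f a := by
  have := fun a => (U.eventually_exists_mem_iff (P := fun b i => g i a = b) (hs a)).1
    ((hg a).mono fun i hi => ⟨_, hi, rfl⟩)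
  choose f hf hfg using this
  exact ⟨f, hf, hfg⟩

section Hypergraph

variable {V E : Type*} {I : E → Finset V}

theorem nonempty_of_sparse {k : ℕ}
    (hsparse : ∀ X : Finset V, {e : E | I e ⊆ X}.Finite ∧ {e : E | I e ⊆ X}.ncard ≤ k * #X)
    (e : E) : (I e).Nonempty := by
  obtain ⟨hfin, hcard⟩ := hsparse ∅
  have hempty : {e : E | I e ⊆ ∅} = ∅ := (Set.ncard_eq_zero hfin).1 (by simpa using hcard)
  by_contra he
  exact (Set.eq_empty_iff_forall_notMem.1 hempty) e (by simpa using he)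

theorem exists_mem_card_filter_mem_le [DecidableEq V] {k m : ℕ} (hrank : ∀ e : E, #(I e) ≤ m)
    {F : Finset E} {X : Finset V} (hX : X.Nonempty) (hF : #F ≤ k * #X) :
    ∃ v ∈ X, #{e ∈ F | v ∈ I e} ≤ m * k := by
  refine exists_le_of_sum_le hX ?_
  calc ∑ v ∈ X, #{e ∈ F | v ∈ I e}
      = ∑ e ∈ F, #{v ∈ X | v ∈ I e} :=
        sum_card_bipartiteAbove_eq_sum_card_bipartiteBelow (r := fun v e => v ∈ I e)
    _ ≤ ∑ _e ∈ F, m :=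
        sum_le_sum fun e _ => (card_le_card fun v hv => (mem_filter.1 hv).2).trans (hrank e)
    _ = #F * m := by rw [sum_const, smul_eq_mul]
    _ ≤ k * #X * m := Nat.mul_le_mul_right m hF
    _ = ∑ _v ∈ X, m * k := by rw [sum_const, smul_eq_mul]; ring

variable (I) in
structure IsBoundedAntisymmOrientationOn (n : ℕ) (X : Finset V) (g : E → V) : Prop where
  mem : ∀ e, I e ⊆ X → g e ∈ I e
  card_le : ∀ v (T : Finset E), (∀ e ∈ T, I e ⊆ X ∧ g e = v) → #T ≤ n
  antisymm : ∀ a b, a ≠ b → ∀ e₁ e₂, I e₁ ⊆ X → I e₂ ⊆ X →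
    a ∈ I e₁ → g e₁ = b → b ∈ I e₂ → g e₂ ≠ a

theorem IsBoundedAntisymmOrientationOn.of_erase [DecidableEq V] {n : ℕ} {X : Finset V}
    {v : V} {g : E → V} (hg : IsBoundedAntisymmOrientationOn I n (X.erase v) g) (hv : v ∈ X)
    (hdeg : ∀ T : Finset E, (∀ e ∈ T, I e ⊆ X ∧ v ∈ I e) → #T ≤ n) :
    IsBoundedAntisymmOrientationOn I n X fun e => if v ∈ I e then v else g e := by
  have herase : ∀ {e}, I e ⊆ X → v ∉ I e → I e ⊆ X.erase v :=
    fun heX hve => subset_erase.2 ⟨heX, hve⟩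
  refine ⟨fun e heX => ?_, fun u T hT => ?_, fun a b hab e₁ e₂ he₁ he₂ ha hgb hb hga => ?_⟩
  · split_ifs with hve
    · exact hve
    · exact hg.mem e (herase heX hve)
  · by_cases huv : u = v
    · subst huv
      refine hdeg T fun e he => ⟨(hT e he).1, ?_⟩
      by_contra hve
      have hge : g e = u := by simpa [hve] using (hT e he).2
      exact hve (hge ▸ hg.mem e (herase (hT e he).1 hve))
    · refine hg.card_le u T fun e he => ?_
      have hve : v ∉ I e := fun hve => huv (by simpa [hve] using (hT e he).2.symm)
      simpa [hve] using And.intro (herase (hT e he).1 hve) (hT e he).2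
  · have hv₁ : v ∉ I e₁ := fun hve => by simp_all
    have hv₂ : v ∉ I e₂ := fun hve => by simp_all
    simp only [hv₁, hv₂, if_false] at hgb hga
    exact hg.antisymm a b hab e₁ e₂ (herase he₁ hv₁) (herase he₂ hv₂) ha hgb hb hga

theorem exists_isBoundedAntisymmOrientationOn {k m : ℕ} (hrank : ∀ e : E, #(I e) ≤ m)
    (hsparse : ∀ X : Finset V, {e : E | I e ⊆ X}.Finite ∧ {e : E | I e ⊆ X}.ncard ≤ k * #X)
    (X : Finset V) : ∃ g : E → V, IsBoundedAntisymmOrientationOn I (m * k) X g := by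
  classical
  induction X using Finset.strongInduction with
  | _ X ih =>
    obtain rfl | hX := X.eq_empty_or_nonempty
    · have hout : ∀ e, ¬I e ⊆ ∅ := fun e he => by
        simpa [subset_empty.1 he] using nonempty_of_sparse hsparse e
      refine ⟨fun e => (nonempty_of_sparse hsparse e).choose, fun e he => (hout e he).elim,
        fun v T hT => ?_, fun a b _ e₁ _ he₁ => (hout e₁ he₁).elim⟩
      simp [eq_empty_iff_forall_notMem.2 fun e he => hout e (hT e he).1]
    · obtain ⟨hfin, hcard⟩ := hsparse X
      obtain ⟨v, hv, hdeg⟩ := exists_mem_card_filter_mem_le hrank hX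
        (F := hfin.toFinset) (by rwa [← Set.ncard_eq_toFinset_card _ hfin])
      obtain ⟨g, hg⟩ := ih (X.erase v) (erase_ssubset hv)
      refine ⟨_, hg.of_erase hv fun T hT => (card_le_card fun e he => ?_).trans hdeg⟩
      simpa using hT e he

theorem exists_orientation_of_forall_isBoundedAntisymmOrientationOn {n : ℕ}
    (h : ∀ X : Finset V, ∃ g : E → V, IsBoundedAntisymmOrientationOn I n X g) :
    ∃ f : E → V, (∀ e : E, f e ∈ I e) ∧
      (∀ a : V, {e : E | f e = a}.Finite ∧ {e : E | f e = a}.ncard ≤ n) ∧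
      ∀ a b : V, a ≠ b →
        (∃ e : E, a ∈ I e ∧ f e = b) → ¬ ∃ e : E, b ∈ I e ∧ f e = a := by
  classical
  choose g hg using h
  let U := Ultrafilter.of (atTop : Filter (Finset V))
  have hU : ∀ X : Finset V, ∀ᶠ Y in U, X ⊆ Y :=
    fun X => Ultrafilter.of_le _ (eventually_ge_atTop X)
  obtain ⟨f, hfI, hfg⟩ := U.exists_forall_eventually_eq g (s := fun e => ↑(I e))
    (fun e => (I e).finite_toSet) fun e => (hU (I e)).mono fun Y hY => (hg Y).mem e hY
  refine ⟨f, hfI, fun a => Set.finite_and_ncard_le_of_forall_finset_card_le fun T hT => ?_, ?_⟩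
  · obtain ⟨Y, hY, hgY⟩ :=
      ((hU (T.biUnion I)).and ((eventually_all_finset T).2 fun e _ => hfg e)).exists
    exact (hg Y).card_le a T fun e he =>
      ⟨(subset_biUnion_of_mem I he).trans hY, (hgY e he).trans (hT he)⟩
  · rintro a b hab ⟨e₁, ha, hb'⟩ ⟨e₂, hb, ha'⟩
    obtain ⟨Y, hY₁, hY₂, hg₁, hg₂⟩ := ((hU (I e₁)).and ((hU (I e₂)).and
      ((hfg e₁).and (hfg e₂)))).exists
    exact (hg Y).antisymm a b hab e₁ e₂ hY₁ hY₂ ha (hg₁.trans hb') hb (hg₂.trans ha')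

end Hypergraph

theorem k_sparse_has_antisymmetric_orientation_general {V E : Type*} (k m : ℕ)
    (I : E → Finset V)
    (hrank : ∀ e : E, (I e).card ≤ m)
    (hsparse : ∀ X : Finset V,
      {e : E | I e ⊆ X}.Finite ∧ {e : E | I e ⊆ X}.ncard ≤ k * X.card) :
    ∃ f : E → V, (∀ e : E, f e ∈ I e) ∧
      (∀ a : V, {e : E | f e = a}.Finite ∧ {e : E | f e = a}.ncard ≤ m * k ^ 2) ∧
      ∀ a b : V, a ≠ b →
        (∃ e : E, a ∈ I e ∧ f e = b) → ¬ ∃ e : E, b ∈ I e ∧ f e = a := by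
  obtain ⟨f, hfI, hbound, hanti⟩ := exists_orientation_of_forall_isBoundedAntisymmOrientationOn
    (exists_isBoundedAntisymmOrientationOn hrank hsparse)
  refine ⟨f, hfI, fun a => ⟨(hbound a).1, (hbound a).2.trans ?_⟩, hanti⟩
  exact Nat.mul_le_mul_left m (Nat.le_self_pow two_ne_zero k)

/-- Every `k`-sparse hypergraph (possibly with multiple edges) of rank at most `m`
(where `0 < k` and `1 < m`) has an orientation `f` bounded by `m·k²` such that the
edge relation of the directed graph `O_f(H)` is antisymmetric. -/
theorem k_sparse_has_antisymmetric_orientation {V E : Type*} (k m : ℕ)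
    (hk : 0 < k) (hm : 1 < m) (I : E → Finset V)
    (hrank : ∀ e : E, (I e).card ≤ m)
    (hsparse : ∀ X : Finset V,
      {e : E | I e ⊆ X}.Finite ∧ {e : E | I e ⊆ X}.ncard ≤ k * X.card) :
    ∃ f : E → V, (∀ e : E, f e ∈ I e) ∧
      (∀ a : V, {e : E | f e = a}.Finite ∧ {e : E | f e = a}.ncard ≤ m * k ^ 2) ∧
      ∀ a b : V, a ≠ b →
        (∃ e : E, a ∈ I e ∧ f e = b) → ¬ ∃ e : E, b ∈ I e ∧ f e = a :=
  k_sparse_has_antisymmetric_orientation_general k m I hrank hsparse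
end

section
/- Let k, m be natural numbers with 0 < k and 1 < m, and let H be a finite k-sparse hypergraph (possibly with multiple edges, with finitely many vertices and finitely many edges) of rank at most m. Then H has an orientation f that is bounded by m·k² and such that the edge relation of the directed graph O_f(H) is antisymmetric; that is, there are no two distinct vertices a, b such that both (a,b) and (b,a) are edges of O_f(H). -/
open Finset in
private lemma aux_orient {V E : Type*} [Fintype V] [Fintype E] [DecidableEq V] [DecidableEq E]
    (k m : ℕ) (I : E → Finset V)
    (hne : ∀ e, (I e).Nonempty)
    (hrank : ∀ e : E, (I e).card ≤ m)
    (hsparse : ∀ X : Finset V, (Finset.univ.filter (fun e => I e ⊆ X)).card ≤ k * X.card) :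
    ∀ X : Finset V, ∃ (g : E → V) (ρ : V → ℕ),
      (∀ e, g e ∈ I e) ∧
      (∀ e, I e ⊆ X → ∀ a ∈ I e, a ≠ g e → ρ (g e) < ρ a) ∧
      (∀ a : V, (Finset.univ.filter (fun e => I e ⊆ X ∧ g e = a)).card ≤ m * k) := by
  intro X
  induction X using Finset.strongInduction with
  | _ X IH =>
    rcases X.eq_empty_or_nonempty with rfl | hXne
    · refine ⟨fun e => (hne e).choose, fun _ => 0, fun e => (hne e).choose_spec, ?_, ?_⟩
      · intro e he a ha
        exact absurd (he ha) (by simp)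
      · intro a
        have h0 : (Finset.univ.filter (fun e => I e ⊆ (∅ : Finset V) ∧
            (hne e).choose = a)).card = 0 := by
          rw [Finset.card_eq_zero]
          ext e
          simp only [mem_filter, mem_univ, true_and, Finset.notMem_empty, iff_false]
          rintro ⟨hsub, -⟩
          exact absurd (hsub (hne e).choose_spec) (Finset.notMem_empty _)
        exact h0 ▸ Nat.zero_le _
    · -- find a vertex v of low "degree" among edges inside X
      set S := Finset.univ.filter (fun e => I e ⊆ X) with hS
      have hsum : ∑ a ∈ X, (S.filter (fun e => a ∈ I e)).card ≤ ∑ _a ∈ X, m * k := by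
        have h1 : ∑ a ∈ X, (S.filter (fun e => a ∈ I e)).card
            = ∑ e ∈ S, (X.filter (fun a => a ∈ I e)).card := by
          simp only [Finset.card_filter]
          exact Finset.sum_comm
        have h2 : ∑ e ∈ S, (X.filter (fun a => a ∈ I e)).card ≤ ∑ _e ∈ S, m := by
          refine Finset.sum_le_sum fun e _ => ?_
          exact le_trans (Finset.card_le_card (fun a ha => (Finset.mem_filter.mp ha).2))
            (hrank e)
        have h3 : S.card * m ≤ (k * X.card) * m :=
          Nat.mul_le_mul_right m (hsparse X)
        rw [h1]
        calc ∑ e ∈ S, (X.filter (fun a => a ∈ I e)).card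
            ≤ ∑ _e ∈ S, m := h2
          _ = S.card * m := by simp [Finset.sum_const, Nat.smul_one_eq_cast, mul_comm]
          _ ≤ (k * X.card) * m := h3
          _ = ∑ _a ∈ X, m * k := by simp [Finset.sum_const]; ring
      obtain ⟨v, hvX, hv⟩ := Finset.exists_le_of_sum_le hXne hsum
      obtain ⟨g', ρ', hg'mem, hg'ord, hg'cnt⟩ := IH (X.erase v) (Finset.erase_ssubset hvX)
      refine ⟨fun e => if I e ⊆ X ∧ v ∈ I e then v else g' e,
        fun a => if a = v then 0 else ρ' a + 1, ?_, ?_, ?_⟩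
      · intro e
        by_cases h : I e ⊆ X ∧ v ∈ I e
        · simp [h, h.2]
        · simp only [h, if_false]; exact hg'mem e
      · intro e heX a ha hane
        by_cases h : I e ⊆ X ∧ v ∈ I e
        · simp only [if_pos h] at hane ⊢
          simp [hane]
        · have hvI : v ∉ I e := fun hvI => h ⟨heX, hvI⟩
          have heX' : I e ⊆ X.erase v := fun b hb =>
            Finset.mem_erase.mpr ⟨fun hbv => hvI (hbv ▸ hb), heX hb⟩
          simp only [if_neg h] at hane ⊢
          have h1 := hg'ord e heX' a ha hane
          have hgv : g' e ≠ v := fun hgv => hvI (hgv ▸ hg'mem e)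
          have hav : a ≠ v := fun hav => hvI (hav ▸ ha)
          simp only [if_neg h, if_neg hgv, if_neg hav]
          omega
      · intro a
        by_cases hav : a = v
        · subst hav
          refine le_trans (Finset.card_le_card ?_) hv
          intro e he
          simp only [Finset.mem_filter, Finset.mem_univ, true_and] at he ⊢
          obtain ⟨heX, hge⟩ := he
          constructor
          · exact Finset.mem_filter.mpr ⟨Finset.mem_univ e, heX⟩
          · by_cases h : I e ⊆ X ∧ a ∈ I e
            · exact h.2
            · simp only [if_neg h] at hge
              exact hge ▸ hg'mem e
        · refine le_trans (Finset.card_le_card ?_) (hg'cnt a)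
          intro e he
          simp only [Finset.mem_filter, Finset.mem_univ, true_and] at he ⊢
          obtain ⟨heX, hge⟩ := he
          by_cases h : I e ⊆ X ∧ v ∈ I e
          · simp only [if_pos h] at hge; exact absurd hge.symm hav
          · simp only [if_neg h] at hge
            have hvI : v ∉ I e := fun hvI => h ⟨heX, hvI⟩
            exact ⟨fun b hb => Finset.mem_erase.mpr ⟨fun hbv => hvI (hbv ▸ hb), heX hb⟩, hge⟩

/-- Every finite `k`-sparse hypergraph (possibly with multiple edges) of rank at most
`m` (where `0 < k` and `1 < m`) has an orientation `f` bounded by `m·k²` such that the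
edge relation of the directed graph `O_f(H)` is antisymmetric. -/
theorem finite_k_sparse_has_antisymmetric_orientation {V E : Type*} [Finite V] [Finite E]
    (k m : ℕ) (hk : 0 < k) (hm : 1 < m) (I : E → Finset V)
    (hrank : ∀ e : E, (I e).card ≤ m)
    (hsparse : ∀ X : Finset V, {e : E | I e ⊆ X}.ncard ≤ k * X.card) :
    ∃ f : E → V, (∀ e : E, f e ∈ I e) ∧
      (∀ a : V, {e : E | f e = a}.ncard ≤ m * k ^ 2) ∧
      ∀ a b : V, a ≠ b →
        (∃ e : E, a ∈ I e ∧ f e = b) → ¬ ∃ e : E, b ∈ I e ∧ f e = a := by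
  classical
  have : Fintype V := Fintype.ofFinite V
  have : Fintype E := Fintype.ofFinite E
  have hncard : ∀ X : Finset V,
      {e : E | I e ⊆ X}.ncard = (Finset.univ.filter (fun e => I e ⊆ X)).card := by
    intro X
    rw [Set.ncard_eq_toFinset_card']
    congr 1
    ext e
    simp
  have hsparse' : ∀ X : Finset V,
      (Finset.univ.filter (fun e => I e ⊆ X)).card ≤ k * X.card := by
    intro X; rw [← hncard]; exact hsparse X
  have hne : ∀ e, (I e).Nonempty := by
    intro e
    rcases Finset.eq_empty_or_nonempty (I e) with h | h
    · exfalso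
      have h0 := hsparse' ∅
      simp only [Finset.card_empty, Nat.mul_zero, Nat.le_zero, Finset.card_eq_zero] at h0
      have : e ∈ Finset.univ.filter (fun e => I e ⊆ (∅ : Finset V)) := by
        simp [h]
      rw [h0] at this
      exact absurd this (Finset.notMem_empty e)
    · exact h
  obtain ⟨g, ρ, hgmem, hgord, hgcnt⟩ :=
    aux_orient k m I hne hrank hsparse' Finset.univ
  refine ⟨g, hgmem, ?_, ?_⟩
  · intro a
    have h1 : {e : E | g e = a}.ncard
        = (Finset.univ.filter (fun e => I e ⊆ Finset.univ ∧ g e = a)).card := by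
      rw [Set.ncard_eq_toFinset_card']
      congr 1
      ext e
      simp
    rw [h1]
    calc (Finset.univ.filter (fun e => I e ⊆ Finset.univ ∧ g e = a)).card
        ≤ m * k := hgcnt a
      _ ≤ m * k ^ 2 := Nat.mul_le_mul_left m (Nat.le_self_pow two_ne_zero k)
  · rintro a b hab ⟨e, hae, hfe⟩ ⟨e', hbe', hfe'⟩
    have h1 : ρ (g e) < ρ a := hgord e (Finset.subset_univ _) a hae (by rw [hfe]; exact hab)
    have h2 : ρ (g e') < ρ b := hgord e' (Finset.subset_univ _) b hbe' (by rw [hfe']; exact hab.symm)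
    rw [hfe] at h1
    rw [hfe'] at h2
    omega
end

section
/- Let G be a simple graph, δ a distribution of G, and f a δ-flow of G. Then there exists an acyclic δ-flow f′ of G such that, for every natural number k: if f is edge-bounded by k then f′ is edge-bounded by k, and if f is vertex-bounded by k then f′ is vertex-bounded by k. -/
/-!
Call a flow a conformal reduction of `f` if on every edge it runs in the direction of `f` and
carries at most as much; such flows keep both bounds of `f`, so it suffices to find an acyclic one
with the defects of `f`. By Zorn's lemma there is a minimal one: the pointwise infimum of a chain
has the right defects, since at each vertex only finitely many edges matter and on those a single
member of the chain already attains the infimum. A positive cycle of a minimal reduction may be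
taken simple (a shortest one), and removing one unit of flow along it changes no defect and gives
a smaller reduction.
-/

open Finset Function

theorem IsChain.exists_forall_mem_eq_sInf {ι α : Type*} [ConditionallyCompleteLinearOrderBot α]
    [WellFoundedLT α] {c : Set (ι → α)} (hc : IsChain (· ≤ ·) c) (hne : c.Nonempty)
    (s : Finset ι) : ∃ p ∈ c, ∀ i ∈ s, p i = sInf c i := by
  classical
  have hle : ∀ r ∈ c, sInf c ≤ r := fun r hr => csInf_le (OrderBot.bddBelow c) hr
  induction s using Finset.induction_on with
  | empty => obtain ⟨p, hp⟩ := hne; exact ⟨p, hp, by simp⟩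
  | insert j s _ ih =>
    obtain ⟨p, hpc, hps⟩ := ih
    obtain ⟨q, hqc, hqj⟩ : ∃ q ∈ c, q j = sInf c j := by
      rw [sInf_apply_eq_sInf_image]; exact csInf_mem (hne.image _)
    rcases hc.total hpc hqc with hpq | hqp
    · refine ⟨p, hpc, fun i hi => ?_⟩
      rcases mem_insert.1 hi with rfl | hi
      · exact le_antisymm (hqj ▸ hpq i) (hle p hpc i)
      · exact hps i hi
    · refine ⟨q, hqc, fun i hi => ?_⟩
      rcases mem_insert.1 hi with rfl | hi
      · exact hqj
      · exact le_antisymm ((hqp i).trans (hps i hi).le) (hle q hqc i)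

section ClosedWalk

variable {V : Type*}

def IsClosedWalk (R : V → V → Prop) (n : ℕ) (w : ℕ → V) : Prop :=
  (∀ t < n, R (w t) (w (t + 1))) ∧ w n = w 0

theorem exists_isClosedWalk_of_cycle {R : V → V → Prop} {m : ℕ} {u : Fin (m + 1) → V}
    (hstep : ∀ i : Fin m, R (u i.castSucc) (u i.succ)) (hlast : R (u (Fin.last m)) (u 0)) :
    ∃ w, IsClosedWalk R (m + 1) w := by
  refine ⟨fun t => if h : t ≤ m then u ⟨t, by omega⟩ else u 0, fun t ht => ?_, by simp⟩
  rcases Nat.lt_or_ge t m with htm | htm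
  · simpa [htm.le, Nat.succ_le_of_lt htm] using hstep ⟨t, htm⟩
  · obtain rfl : t = m := by omega
    simpa [Fin.last] using hlast

/-- A shortest closed walk visits no vertex twice. -/
theorem IsClosedWalk.exists_injOn {R : V → V → Prop} {n : ℕ} {w : ℕ → V} (hn : 0 < n)
    (hw : IsClosedWalk R n w) :
    ∃ n, 0 < n ∧ ∃ w, IsClosedWalk R n w ∧ Set.InjOn w (Set.Iio n) := by
  classical
  have h : ∃ n, 0 < n ∧ ∃ w, IsClosedWalk R n w := ⟨n, hn, w, hw⟩
  obtain ⟨hpos, w, hstep, hclose⟩ := Nat.find_spec h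
  refine ⟨Nat.find h, hpos, w, ⟨hstep, hclose⟩, fun i hi j hj hij => ?_⟩
  by_contra hne
  wlog hlt : i < j generalizing i j
  · exact this j hj i hi hij.symm (Ne.symm hne) (by omega)
  have hj : j < Nat.find h := hj
  refine Nat.find_min h (m := j - i) (by omega) ⟨by omega, fun t => w (i + t), fun t ht => ?_, ?_⟩
  · exact hstep (i + t) (by omega)
  · simp [show i + (j - i) = j by omega, hij]

variable [DecidableEq V]

def walkEdgeCount (w : ℕ → V) (n : ℕ) (e : V × V) : ℕ :=
  #{t ∈ range n | (w t, w (t + 1)) = e}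

theorem walkEdgeCount_le_one {w : ℕ → V} {n : ℕ} (hw : Set.InjOn w (Set.Iio n)) (e : V × V) :
    walkEdgeCount w n e ≤ 1 := by
  refine card_le_one.2 fun s hs t ht => ?_
  simp only [mem_filter, mem_range] at hs ht
  exact hw hs.1 ht.1 (congrArg Prod.fst (hs.2.trans ht.2.symm))

theorem walkEdgeCount_pos {w : ℕ → V} {n t : ℕ} (ht : t < n) :
    0 < walkEdgeCount w n (w t, w (t + 1)) :=
  card_pos.2 ⟨t, by simp [ht]⟩

theorem walkEdgeCount_le {w : ℕ → V} {n : ℕ} {p : V × V → ℕ} (hw : Set.InjOn w (Set.Iio n))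
    (hp : ∀ t < n, 0 < p (w t, w (t + 1))) : walkEdgeCount w n ≤ p := by
  intro e
  rcases Nat.eq_zero_or_pos (walkEdgeCount w n e) with he | he
  · simp [he]
  obtain ⟨t, ht⟩ := card_pos.1 he
  obtain ⟨htn, rfl⟩ := by simpa only [mem_filter, mem_range] using ht
  exact (walkEdgeCount_le_one hw _).trans (hp t htn)

end ClosedWalk

namespace IntFlow

variable {V : Type*}

/-- A skew-symmetric `g` is `ofPos (pos g)`, and `ofPos p` is a conformal reduction of `f` iff
`p ≤ pos f`: the reductions of `f` are ordered pointwise. -/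
def ofPos (p : V × V → ℕ) (a b : V) : ℤ := p (a, b) - p (b, a)

def pos (f : V → V → ℤ) (e : V × V) : ℕ := (f e.1 e.2).toNat

noncomputable def defect (g : V → V → ℤ) (v : V) : ℤ := ∑ᶠ u, g v u

theorem ofPos_antisymm (p : V × V → ℕ) (a b : V) : ofPos p a b = -ofPos p b a :=
  (neg_sub _ _).symm

theorem ofPos_pos {f : V → V → ℤ} (hskew : ∀ u v, f u v = -f v u) : ofPos (pos f) = f := by
  funext a b
  simp [ofPos, pos, hskew b a]

theorem ofPos_tsub {p c : V × V → ℕ} (h : c ≤ p) : ofPos (p - c) = ofPos p - ofPos c := by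
  funext a b
  simp only [ofPos, Pi.sub_apply, Nat.cast_sub (h _)]
  ring

theorem defect_sub {g h : V → V → ℤ} (hg : ∀ v, HasFiniteSupport (g v))
    (hh : ∀ v, HasFiniteSupport (h v)) : defect (g - h) = defect g - defect h :=
  funext fun v => finsum_sub_distrib (hg v) (hh v)

theorem support_ofPos_walkEdgeCount_subset [DecidableEq V] (w : ℕ → V) (n : ℕ) (x : V) :
    support (ofPos (walkEdgeCount w n) x) ⊆ (range (n + 1)).image w := by
  intro b hb
  by_contra hbw
  have hnot : ∀ t ∈ range n, w t ≠ b ∧ w (t + 1) ≠ b := fun t ht =>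
    ⟨fun h => hbw (mem_image.2 ⟨t, by simp at ht ⊢; omega, h⟩),
      fun h => hbw (mem_image.2 ⟨t + 1, by simp at ht ⊢; omega, h⟩)⟩
  have hout : {t ∈ range n | (w t, w (t + 1)) = (x, b)} = ∅ :=
    filter_eq_empty_iff.2 fun t ht h => (hnot t ht).2 (congrArg Prod.snd h)
  have hin : {t ∈ range n | (w t, w (t + 1)) = (b, x)} = ∅ :=
    filter_eq_empty_iff.2 fun t ht h => (hnot t ht).1 (congrArg Prod.fst h)
  exact hb (by simp only [ofPos, walkEdgeCount, hout, hin, card_empty, sub_self])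

/-- Along a closed walk every vertex is entered as often as it is left. -/
theorem defect_ofPos_walkEdgeCount [DecidableEq V] {w : ℕ → V} {n : ℕ} (hw : w n = w 0) :
    defect (ofPos (walkEdgeCount w n)) = 0 := by
  funext x
  rw [defect, finsum_eq_sum_of_support_subset _ (support_ofPos_walkEdgeCount_subset w n x)]
  simp only [ofPos, walkEdgeCount, card_filter, Nat.cast_sum, Nat.cast_ite, Nat.cast_one,
    Nat.cast_zero, Prod.mk.injEq, ← sum_sub_distrib]
  rw [sum_comm]
  have hinner : ∀ t ∈ range n, ∑ b ∈ (range (n + 1)).image w,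
      ((if w t = x ∧ w (t + 1) = b then (1 : ℤ) else 0) - if w t = b ∧ w (t + 1) = x then 1 else 0)
      = (if w t = x then 1 else 0) - if w (t + 1) = x then 1 else 0 := by
    intro t ht
    have h0 : w t ∈ (range (n + 1)).image w := mem_image_of_mem w (by simp at ht ⊢; omega)
    have h1 : w (t + 1) ∈ (range (n + 1)).image w := mem_image_of_mem w (by simpa using ht)
    simp only [sum_sub_distrib, ite_and, sum_ite_irrel, sum_ite_eq, h0, h1, if_true, sum_const_zero]
  rw [sum_congr rfl hinner, sum_range_sub' (fun t => if w t = x then (1 : ℤ) else 0), hw, sub_self,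
    Pi.zero_apply]

section Conformal

variable {f : V → V → ℤ} {p q : V × V → ℕ}

theorem ofPos_eq_zero (hskew : ∀ u v, f u v = -f v u) (hp : p ≤ pos f) {a b : V}
    (h : f a b = 0) : ofPos p a b = 0 := by
  have hab := hp (a, b)
  have hba := hp (b, a)
  simp only [pos, hskew b a, h, neg_zero, Int.toNat_zero, nonpos_iff_eq_zero] at hab hba
  simp [ofPos, hab, hba]

theorem support_ofPos_subset (hskew : ∀ u v, f u v = -f v u) (hp : p ≤ pos f) (v : V) :
    support (ofPos p v) ⊆ {u | f v u ≠ 0} :=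
  fun _ hu => mt (ofPos_eq_zero hskew hp) hu

theorem abs_ofPos_le (hskew : ∀ u v, f u v = -f v u) (hp : p ≤ pos f) (a b : V) :
    |ofPos p a b| ≤ |f a b| := by
  have hab := hp (a, b)
  have hba := hp (b, a)
  simp only [pos, hskew b a] at hab hba
  rw [ofPos, abs_le]
  constructor <;> cases abs_cases (f a b) <;> omega

theorem ofPos_eq_of_forall_ne_zero (hskew : ∀ u v, f u v = -f v u) (hp : p ≤ pos f)
    (hq : q ≤ pos f) {x : V} (h : ∀ u, f x u ≠ 0 → p (x, u) = q (x, u) ∧ p (u, x) = q (u, x)) :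
    ofPos p x = ofPos q x := by
  funext u
  by_cases hxu : f x u = 0
  · rw [ofPos_eq_zero hskew hp hxu, ofPos_eq_zero hskew hq hxu]
  · simp only [ofPos, (h u hxu).1, (h u hxu).2]

def conformalReductions (f : V → V → ℤ) : Set (V × V → ℕ) :=
  {p | p ≤ pos f ∧ defect (ofPos p) = defect f}

theorem sInf_mem_conformalReductions (hskew : ∀ u v, f u v = -f v u)
    (hfin : ∀ v, {u | f v u ≠ 0}.Finite) {c : Set (V × V → ℕ)} (hc : IsChain (· ≤ ·) c)
    (hcS : c ⊆ conformalReductions f) (hne : c.Nonempty) : sInf c ∈ conformalReductions f := by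
  classical
  obtain ⟨y, hy⟩ := hne
  have hle : sInf c ≤ pos f := (csInf_le (OrderBot.bddBelow c) hy).trans (hcS hy).1
  refine ⟨hle, funext fun x => ?_⟩
  set N := (hfin x).toFinset
  -- at `x` the defect only sees the finitely many edges of `f` at `x`
  obtain ⟨p, hpc, hp⟩ :=
    hc.exists_forall_mem_eq_sInf ⟨y, hy⟩ (N.image (fun u => (x, u)) ∪ N.image (fun u => (u, x)))
  have hpx : ofPos (sInf c) x = ofPos p x :=
    ofPos_eq_of_forall_ne_zero hskew hle (hcS hpc).1 fun u hu =>
      ⟨(hp _ (by simp [N, hu])).symm, (hp _ (by simp [N, hu])).symm⟩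
  rw [defect, hpx, ← congrFun (hcS hpc).2 x, defect]

theorem exists_minimal_conformalReductions (hskew : ∀ u v, f u v = -f v u)
    (hfin : ∀ v, {u | f v u ≠ 0}.Finite) : ∃ p, Minimal (· ∈ conformalReductions f) p := by
  obtain ⟨p, -, hp⟩ := zorn_le_nonempty₀ (α := (V × V → ℕ)ᵒᵈ) (conformalReductions f)
    (fun c hcS hc y hy => ⟨OrderDual.toDual (sInf (OrderDual.toDual ⁻¹' c)),
      sInf_mem_conformalReductions hskew hfin hc.symm hcS ⟨y, hy⟩,
      fun z hz => OrderDual.le_toDual.2 (csInf_le (OrderBot.bddBelow _) hz)⟩)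
    (pos f) ⟨le_rfl, by rw [ofPos_pos hskew]⟩
  exact ⟨p, hp⟩

/-- Removing one unit of flow along a simple positive cycle would give a smaller member. -/
theorem not_isClosedWalk_of_minimal (hskew : ∀ u v, f u v = -f v u)
    (hfin : ∀ v, {u | f v u ≠ 0}.Finite) (hp : Minimal (· ∈ conformalReductions f) p) {n : ℕ}
    {w : ℕ → V} (hn : 0 < n) : ¬ IsClosedWalk (fun a b => 0 < ofPos p a b) n w := by
  classical
  intro hw
  obtain ⟨n, hn, w, ⟨hstep, hclose⟩, hinj⟩ := hw.exists_injOn hn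
  have hcp : walkEdgeCount w n ≤ p := walkEdgeCount_le hinj fun t ht => by
    have := hstep t ht
    simp only [ofPos] at this
    omega
  have hsub : p - walkEdgeCount w n ∈ conformalReductions f := by
    refine ⟨tsub_le_self.trans hp.1.1, ?_⟩
    rw [ofPos_tsub hcp, defect_sub (fun v => (hfin v).subset (support_ofPos_subset hskew hp.1.1 v))
      (fun v => ((range (n + 1)).image w).finite_toSet.subset
        (support_ofPos_walkEdgeCount_subset w n v)), defect_ofPos_walkEdgeCount hclose, sub_zero,
      hp.1.2]
  have heq : p (w 0, w (0 + 1)) - walkEdgeCount w n (w 0, w (0 + 1)) = p (w 0, w (0 + 1)) :=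
    congrFun (hp.eq_of_le hsub tsub_le_self) _
  have hle : walkEdgeCount w n (w 0, w (0 + 1)) ≤ p (w 0, w (0 + 1)) := hcp _
  have hpos := walkEdgeCount_pos (w := w) hn
  omega

theorem finsum_abs_ofPos_le (hskew : ∀ u v, f u v = -f v u) (hfin : ∀ v, {u | f v u ≠ 0}.Finite)
    (hp : p ≤ pos f) (v : V) : ∑ᶠ u, |ofPos p u v| ≤ ∑ᶠ u, |f u v| := by
  have hsupp : support (fun u => |f u v|) ⊆ {u | f v u ≠ 0} := fun u hu => by
    simpa [hskew u v] using hu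
  refine finsum_le_finsum' ((hfin v).subset fun u hu => ?_) ((hfin v).subset hsupp)
    fun u => abs_ofPos_le hskew hp u v
  exact support_ofPos_subset hskew hp v (by simpa [ofPos_antisymm p u v] using hu)

end Conformal

end IntFlow

open IntFlow in
/-- For every `δ`-flow `f` of a simple graph `G` there exists an acyclic `δ`-flow `f'`
such that for every `k`: if `f` is edge-bounded by `k` then so is `f'`, and if `f` is
vertex-bounded by `k` then so is `f'`. -/
theorem exists_acyclic_delta_flow {V : Type*} (G : SimpleGraph V) (δ : V → ℕ)
    (f : V → V → ℤ)
    (hskew : ∀ u v : V, f u v = -f v u)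
    (hadj : ∀ u v : V, f u v ≠ 0 → G.Adj u v)
    (hfin : ∀ v : V, {u : V | f v u ≠ 0}.Finite)
    (hδ : ∀ v : V, (∑ᶠ u : V, f v u) = (δ v : ℤ) - 1 ∨
      (δ v = 0 ∧ (∑ᶠ u : V, f v u) = 0)) :
    ∃ f' : V → V → ℤ,
      (∀ u v : V, f' u v = -f' v u) ∧
      (∀ u v : V, f' u v ≠ 0 → G.Adj u v) ∧
      (∀ v : V, {u : V | f' v u ≠ 0}.Finite) ∧
      (∀ v : V, (∑ᶠ u : V, f' v u) = (δ v : ℤ) - 1 ∨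
        (δ v = 0 ∧ (∑ᶠ u : V, f' v u) = 0)) ∧
      (¬ ∃ (m : ℕ) (u : Fin (m + 1) → V),
        (∀ i : Fin m, 0 < f' (u i.castSucc) (u i.succ)) ∧
          0 < f' (u (Fin.last m)) (u 0)) ∧
      ∀ k : ℕ,
        ((∀ u v : V, |f u v| ≤ (k : ℤ)) → ∀ u v : V, |f' u v| ≤ (k : ℤ)) ∧
        ((∀ v : V, ∑ᶠ u : V, |f u v| ≤ (k : ℤ)) →
          ∀ v : V, ∑ᶠ u : V, |f' u v| ≤ (k : ℤ)) := by
  obtain ⟨p, hp⟩ := exists_minimal_conformalReductions hskew hfin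
  have hpf : p ≤ pos f := hp.1.1
  refine ⟨ofPos p, ofPos_antisymm p, fun u v h => hadj u v (support_ofPos_subset hskew hpf u h),
    fun v => (hfin v).subset (support_ofPos_subset hskew hpf v), fun v => ?_, ?_, fun k =>
    ⟨fun hk u v => (abs_ofPos_le hskew hpf u v).trans (hk u v),
      fun hk v => (finsum_abs_ofPos_le hskew hfin hpf v).trans (hk v)⟩⟩
  · have hdef : ∑ᶠ u, ofPos p v u = ∑ᶠ u, f v u := congrFun hp.1.2 v
    rw [hdef]
    exact hδ v
  · rintro ⟨m, u, hstep, hlast⟩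
    obtain ⟨w, hw⟩ := exists_isClosedWalk_of_cycle (R := fun a b => 0 < ofPos p a b) hstep hlast
    exact not_isClosedWalk_of_minimal hskew hfin hp m.succ_pos hw
end

section
/- Let G be a locally finite simple graph (every vertex has only finitely many neighbours) and let δ be a k-sparse distribution of G. Then G has a δ-flow f that is edge-bounded by k. -/
/-!
On a finite set `W` the flow is built by augmenting paths. Among the flows bounded by `k` whose
defect on `W` is at most `δ - 1`, or `0` where `δ = 0`, take one of least total deficiency on `W`.
If some `v ∈ W` is still deficient, consider the vertices reachable from `v` along edges that are
not saturated. Either one of them is a sink (outside `W`, or with `δ = 0` and defect `0`), and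
pushing one unit along a simple path to it lowers the deficiency; or they form a finite set `Z`
all of whose leaving edges carry `k`, so `∑_{Z} δ > |Z| + k |B(Z)|`.

Compactness then glues the finite solutions: along an ultrafilter refining `atTop` on the finite
subsets of `V`, each value `f u v` ranges over the finite set `[-k, k]` and so converges, and by
local finiteness the defect at `v` depends on finitely many of these values.
-/

open Finset Filter

theorem List.exists_nodup_isChain_cons_of_relationReflTransGen {α : Type*} {r : α → α → Prop}
    {a b : α} (h : Relation.ReflTransGen r a b) :
    ∃ l, IsChain r (a :: l) ∧ (a :: l).Nodup ∧ getLast (a :: l) (cons_ne_nil _ _) = b := by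
  refine Relation.ReflTransGen.head_induction_on h ⟨[], .singleton _, nodup_singleton _, rfl⟩ ?_
  rintro c d hcd - ⟨l, hchain, hnodup, hlast⟩
  by_cases hc : c ∈ d :: l
  · obtain ⟨p, s, hps⟩ := append_of_mem hc
    rw [hps] at hchain hnodup
    refine ⟨s, hchain.suffix (suffix_append _ _), hnodup.sublist (sublist_append_right _ _), ?_⟩
    rw [← hlast, getLast_congr _ _ hps, getLast_append_of_ne_nil]; simp
  · exact ⟨d :: l, .cons_cons hcd hchain, nodup_cons.2 ⟨hc, hnodup⟩, by rwa [getLast_cons_cons]⟩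

theorem Ultrafilter.exists_eventually_eq_of_forall_mem_finite {α β : Type*} (U : Ultrafilter α)
    {s : Set β} (hs : s.Finite) {g : α → β} (hg : ∀ a, g a ∈ s) : ∃ b, ∀ᶠ a in U, g a = b := by
  obtain ⟨b, -, hb⟩ := (U.map g).eq_pure_of_finite_mem hs (Ultrafilter.mem_map.2 (univ_mem' hg))
  exact ⟨b, show g ⁻¹' {b} ∈ U from Ultrafilter.mem_map.1 (hb ▸ rfl)⟩

theorem Finset.sum_sum_eq_zero_of_antisymm {α M : Type*} [AddCommGroup M] [IsAddTorsionFree M]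
    {f : α → α → M} (hf : ∀ u v, f u v = -f v u) (Z : Finset α) :
    ∑ u ∈ Z, ∑ v ∈ Z, f u v = 0 := by
  refine self_eq_neg.1 ?_
  conv_lhs => rw [sum_comm]
  simp only [← sum_neg_distrib, ← hf]

namespace SimpleGraph

variable {V : Type*} (G : SimpleGraph V) (k : ℕ)

structure IsBoundedFlow (f : V → V → ℤ) : Prop where
  antisymm : ∀ u v, f u v = -f v u
  adj_of_ne_zero : ∀ u v, f u v ≠ 0 → G.Adj u v
  le : ∀ u v, f u v ≤ k

def Residual (f : V → V → ℤ) (u v : V) : Prop := G.Adj u v ∧ f u v < k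

def defect [G.LocallyFinite] (f : V → V → ℤ) (v : V) : ℤ := ∑ u ∈ G.neighborFinset v, f v u

def unitFlow [DecidableEq V] (a b u v : V) : ℤ :=
  (if u = a ∧ v = b then 1 else 0) - (if u = b ∧ v = a then 1 else 0)

variable {G k}

theorem isBoundedFlow_zero : G.IsBoundedFlow k 0 := ⟨by simp, by simp, by simp⟩

theorem IsBoundedFlow.abs_le {f : V → V → ℤ} (hf : G.IsBoundedFlow k f) (u v : V) :
    |f u v| ≤ k :=
  _root_.abs_le.2 ⟨by linarith [hf.le v u, hf.antisymm u v], hf.le u v⟩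

theorem defect_add [G.LocallyFinite] (f g : V → V → ℤ) (v : V) :
    G.defect (f + g) v = G.defect f v + G.defect g v :=
  sum_add_distrib

section unitFlow

variable [DecidableEq V] {a b : V}

theorem unitFlow_of_ne {u v : V} (hu : u ≠ a) (hv : v ≠ a) : unitFlow a b u v = 0 := by
  simp [unitFlow, hu, hv]

theorem IsBoundedFlow.add_unitFlow {f : V → V → ℤ} (hf : G.IsBoundedFlow k f)
    (hab : G.Residual k f a b) : G.IsBoundedFlow k (f + unitFlow a b) := by
  obtain ⟨hadj, hlt⟩ := hab
  refine ⟨fun u v => ?_, fun u v => ?_, fun u v => ?_⟩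
  · simp only [Pi.add_apply, unitFlow, hf.antisymm u v]
    split_ifs <;> grind
  · simp only [Pi.add_apply, unitFlow]
    split_ifs with h1 h2 h2
    · grind
    · exact fun _ => h1.1 ▸ h1.2 ▸ hadj
    · exact fun _ => h2.1 ▸ h2.2 ▸ hadj.symm
    · simpa using hf.adj_of_ne_zero u v
  · simp only [Pi.add_apply, unitFlow]
    split_ifs with h1 h2 h2
    · grind
    · grind
    · linarith [hf.le u v]
    · simpa using hf.le u v

variable [G.LocallyFinite]

theorem defect_unitFlow (hab : G.Adj a b) (v : V) :
    G.defect (unitFlow a b) v = (if v = a then 1 else 0) - (if v = b then 1 else 0) := by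
  simp only [defect, unitFlow, sum_sub_distrib]
  congr 1 <;> split_ifs with h <;> simp [h, hab, hab.symm]

theorem IsBoundedFlow.exists_push_of_isChain {f : V → V → ℤ} (hf : G.IsBoundedFlow k f)
    {v : V} {l : List V} (hchain : (v :: l).IsChain (G.Residual k f)) (hnodup : (v :: l).Nodup) :
    ∃ g, G.IsBoundedFlow k g ∧ ∀ u, G.defect g u = G.defect f u + (if u = v then 1 else 0) -
      (if u = (v :: l).getLast (List.cons_ne_nil _ _) then 1 else 0) := by
  induction l generalizing v f with
  | nil => exact ⟨f, hf, fun u => by rw [List.getLast_singleton]; ring⟩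
  | cons w l ih =>
    rw [List.isChain_cons_cons] at hchain
    obtain ⟨hv, hnodup⟩ := List.nodup_cons.1 hnodup
    -- `v` does not reappear, so pushing along `v → w` keeps the rest of the path unsaturated
    have hrest : (w :: l).IsChain (G.Residual k (f + unitFlow v w)) := by
      refine hchain.2.imp_of_mem_imp fun x y hx hy hxy => ?_
      rwa [Residual, Pi.add_apply, Pi.add_apply, unitFlow_of_ne (ne_of_mem_of_not_mem hx hv)
        (ne_of_mem_of_not_mem hy hv), add_zero]
    obtain ⟨g, hg, hdg⟩ := ih (hf.add_unitFlow hchain.1) hrest hnodup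
    refine ⟨g, hg, fun u => ?_⟩
    rw [hdg, defect_add, defect_unitFlow hchain.1.1, List.getLast_cons_cons]
    ring

theorem IsBoundedFlow.exists_push_of_reflTransGen {f : V → V → ℤ} (hf : G.IsBoundedFlow k f)
    {v t : V} (hvt : Relation.ReflTransGen (G.Residual k f) v t) :
    ∃ g, G.IsBoundedFlow k g ∧ ∀ u, G.defect g u =
      G.defect f u + (if u = v then 1 else 0) - (if u = t then 1 else 0) := by
  obtain ⟨l, hchain, hnodup, rfl⟩ := List.exists_nodup_isChain_cons_of_relationReflTransGen hvt
  exact hf.exists_push_of_isChain hchain hnodup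

end unitFlow

theorem IsBoundedFlow.sum_defect_eq_sum_sdiff [G.LocallyFinite] [DecidableEq V]
    {f : V → V → ℤ} (hf : G.IsBoundedFlow k f) (Z : Finset V) :
    ∑ u ∈ Z, G.defect f u = ∑ u ∈ Z, ∑ w ∈ G.neighborFinset u \ Z, f u w := by
  have hinner : ∀ u ∈ Z, ∑ w ∈ G.neighborFinset u ∩ Z, f u w = ∑ w ∈ Z, f u w :=
    fun u _ => sum_subset inter_subset_right fun w hw hw' => by
      by_contra hne
      exact hw' (mem_inter.2 ⟨(G.mem_neighborFinset u w).2 (hf.adj_of_ne_zero u w hne), hw⟩)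
  calc ∑ u ∈ Z, G.defect f u
      = ∑ u ∈ Z, (∑ w ∈ G.neighborFinset u ∩ Z, f u w + ∑ w ∈ G.neighborFinset u \ Z, f u w) :=
        sum_congr rfl fun u _ => (sum_inter_add_sum_sdiff _ _ _).symm
    _ = _ := by
      rw [sum_add_distrib, sum_congr rfl hinner, sum_sum_eq_zero_of_antisymm hf.antisymm, zero_add]

/-- A finite set closed under residual steps has every edge leaving it saturated. -/
theorem IsBoundedFlow.sum_defect_eq_of_residual_closed [G.LocallyFinite] [DecidableEq V]
    {f : V → V → ℤ} (hf : G.IsBoundedFlow k f) {Z : Finset V}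
    (hZ : ∀ u ∈ Z, ∀ w, G.Residual k f u w → w ∈ Z) :
    ∑ u ∈ Z, G.defect f u = k * ∑ u ∈ Z, (#(G.neighborFinset u \ Z) : ℤ) := by
  rw [hf.sum_defect_eq_sum_sdiff, mul_sum]
  refine sum_congr rfl fun u hu => ?_
  have hsat : ∀ w ∈ G.neighborFinset u \ Z, f u w = k := fun w hw => by
    obtain ⟨hwN, hwZ⟩ := mem_sdiff.1 hw
    exact le_antisymm (hf.le u w)
      (not_lt.1 fun hlt => hwZ (hZ u hu w ⟨(G.mem_neighborFinset u w).1 hwN, hlt⟩))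
  rw [sum_congr rfl hsat, sum_const, nsmul_eq_mul, mul_comm]

section Sparse

variable [G.LocallyFinite] [DecidableEq V] {δ : V → ℕ}

variable (G k) in
def IsSparse (δ : V → ℕ) : Prop :=
  ∀ Z : Finset V, ∑ v ∈ Z, δ v ≤ #Z + k * ∑ v ∈ Z, #(G.neighborFinset v \ Z)

/-- Otherwise the vertices reachable from `v` by residual steps form a set violating sparsity. -/
theorem IsBoundedFlow.exists_reflTransGen_sink (hδ : G.IsSparse k δ) {f : V → V → ℤ}
    (hf : G.IsBoundedFlow k f) {W : Finset V}
    (hW : ∀ u ∈ W, G.defect f u ≤ δ u - 1 ∨ δ u = 0 ∧ G.defect f u = 0) {v : V}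
    (hdef : G.defect f v < δ v - 1) :
    ∃ t, Relation.ReflTransGen (G.Residual k f) v t ∧ (t ∉ W ∨ δ t = 0 ∧ G.defect f t = 0) := by
  classical
  by_contra! hno
  set Z := W.filter (Relation.ReflTransGen (G.Residual k f) v)
  have hreach : ∀ u, u ∈ Z ↔ Relation.ReflTransGen (G.Residual k f) v u :=
    fun u => mem_filter.trans ⟨And.right, fun h => ⟨(hno u h).1, h⟩⟩
  have hclosed : ∀ u ∈ Z, ∀ w, G.Residual k f u w → w ∈ Z :=
    fun u hu w huw => (hreach w).2 (((hreach u).1 hu).tail huw)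
  have hle : ∀ u ∈ Z, G.defect f u ≤ δ u - 1 := fun u hu => by
    have := hno u ((hreach u).1 hu)
    have := hW u this.1
    omega
  have hlt : ∑ u ∈ Z, G.defect f u < ∑ u ∈ Z, ((δ u : ℤ) - 1) :=
    sum_lt_sum hle ⟨v, (hreach v).2 .refl, hdef⟩
  have hsparse : ∑ u ∈ Z, (δ u : ℤ) ≤ #Z + k * ∑ u ∈ Z, (#(G.neighborFinset u \ Z) : ℤ) := by
    exact_mod_cast hδ Z
  rw [hf.sum_defect_eq_of_residual_closed hclosed, sum_sub_distrib] at hlt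
  simp only [sum_const, nsmul_eq_mul, mul_one] at hlt
  linarith

theorem exists_isBoundedFlow_defect_eq_on_finset (hδ : G.IsSparse k δ) (W : Finset V) :
    ∃ f, G.IsBoundedFlow k f ∧ ∀ v ∈ W, G.defect f v = δ v - 1 ∨ δ v = 0 ∧ G.defect f v = 0 := by
  let deficiency (f : V → V → ℤ) : ℕ := ∑ u ∈ W, ((δ u : ℤ) - 1 - G.defect f u).toNat
  obtain ⟨f, ⟨hf, hW⟩, hmin⟩ := (InvImage.wf deficiency wellFounded_lt).has_min
    {f | G.IsBoundedFlow k f ∧ ∀ u ∈ W, G.defect f u ≤ δ u - 1 ∨ δ u = 0 ∧ G.defect f u = 0}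
    ⟨0, isBoundedFlow_zero, fun u _ => by simp [defect]; omega⟩
  refine ⟨f, hf, fun v hv => ?_⟩
  suffices ¬G.defect f v < δ v - 1 by have := hW v hv; omega
  intro hdef
  obtain ⟨t, hvt, hsink⟩ := hf.exists_reflTransGen_sink hδ hW hdef
  obtain ⟨g, hg, hdg⟩ := hf.exists_push_of_reflTransGen hvt
  replace hsink : t ∈ W → δ t = 0 ∧ G.defect f t = 0 := fun ht => hsink.resolve_left (not_not.2 ht)
  have htv : t ≠ v := by rintro rfl; have := hsink hv; omega
  have hstep : ∀ u ∈ W, (G.defect g u ≤ δ u - 1 ∨ δ u = 0 ∧ G.defect g u = 0) ∧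
      ((δ u : ℤ) - 1 - G.defect g u).toNat ≤ ((δ u : ℤ) - 1 - G.defect f u).toNat := by
    intro u hu
    have := hW u hu
    rw [hdg]
    split_ifs with huv hut hut <;> subst_vars
    · exact absurd rfl htv
    · omega
    · have := hsink hu; omega
    · omega
  refine hmin g ⟨hg, fun u hu => (hstep u hu).1⟩ (show deficiency g < deficiency f from
    sum_lt_sum (fun u hu => (hstep u hu).2) ⟨v, hv, ?_⟩)
  rw [hdg, if_pos rfl, if_neg htv.symm]
  omega

end Sparse

theorem encard_border_eq_sum [G.LocallyFinite] [DecidableEq V] (Z : Finset V) :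
    {p : V × V | G.Adj p.1 p.2 ∧ p.1 ∉ Z ∧ p.2 ∈ Z}.encard =
      ∑ u ∈ Z, (#(G.neighborFinset u \ Z) : ℕ∞) := by
  have hS : {p : V × V | G.Adj p.1 p.2 ∧ p.1 ∉ Z ∧ p.2 ∈ Z} =
      (fun x : (_ : V) × V => (x.2, x.1)) '' ↑(Z.sigma fun u => G.neighborFinset u \ Z) := by
    ext ⟨w, u⟩
    simp [G.adj_comm u w, and_comm, and_left_comm, and_assoc]
  have hinj : Function.Injective fun x : (_ : V) × V => (x.2, x.1) := by
    rintro ⟨a, b⟩ ⟨c, d⟩ h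
    simp_all
  rw [hS, hinj.injOn.encard_image, Set.encard_coe_eq_coe_finsetCard, card_sigma, Nat.cast_sum]

theorem exists_isBoundedFlow_of_forall_finset [G.LocallyFinite] (p : V → ℤ → Prop)
    (h : ∀ W : Finset V, ∃ f, G.IsBoundedFlow k f ∧ ∀ v ∈ W, p v (G.defect f v)) :
    ∃ f, G.IsBoundedFlow k f ∧ ∀ v, p v (G.defect f v) := by
  choose g hg hgW using h
  let U : Ultrafilter (Finset V) := .of atTop
  have hlim (u v : V) : ∃ z, ∀ᶠ W in U, g W u v = z :=
    U.exists_eventually_eq_of_forall_mem_finite (Set.finite_Icc (-k : ℤ) k)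
      fun W => Set.mem_Icc.2 (abs_le.1 ((hg W).abs_le u v))
  choose f hf using hlim
  refine ⟨f, ⟨fun u v => ?_, fun u v hne => ?_, fun u v => ?_⟩, fun v => ?_⟩
  · obtain ⟨W, huv, hvu⟩ := ((hf u v).and (hf v u)).exists
    rw [← huv, ← hvu]
    exact (hg W).antisymm u v
  · obtain ⟨W, huv⟩ := (hf u v).exists
    exact (hg W).adj_of_ne_zero u v (huv ▸ hne)
  · obtain ⟨W, huv⟩ := (hf u v).exists
    exact huv ▸ (hg W).le u v
  · have hnbr : ∀ᶠ W in U, ∀ u ∈ G.neighborFinset v, g W v u = f v u :=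
      (eventually_all_finset _).2 fun u _ => hf v u
    have hmem : ∀ᶠ W in (U : Filter (Finset V)), v ∈ W :=
      Ultrafilter.of_le _ ((eventually_ge_atTop {v}).mono fun W hW => singleton_subset_iff.1 hW)
    obtain ⟨W, hW, hvW⟩ := (hnbr.and hmem).exists
    rw [show G.defect f v = G.defect (g W) v from sum_congr rfl fun u hu => (hW u hu).symm]
    exact hgW W v hvW

theorem IsBoundedFlow.finsum_eq_defect [G.LocallyFinite] {f : V → V → ℤ}
    (hf : G.IsBoundedFlow k f) (v : V) : ∑ᶠ u, f v u = G.defect f v :=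
  finsum_eq_sum_of_support_subset _ fun u hu => by
    simpa using hf.adj_of_ne_zero v u hu

end SimpleGraph

/-- Every locally finite simple graph `G` with a `k`-sparse distribution `δ` has a
`δ`-flow that is edge-bounded by `k`. -/
theorem locally_finite_sparse_distribution_has_flow {V : Type*} (G : SimpleGraph V)
    (k : ℕ) (δ : V → ℕ)
    (hlf : ∀ v : V, (G.neighborSet v).Finite)
    (hsparse : ∀ Z : Finset V,
      (∑ v ∈ Z, (δ v : ℕ∞)) ≤ (Z.card : ℕ∞) +
        (k : ℕ∞) * {p : V × V | G.Adj p.1 p.2 ∧ p.1 ∉ Z ∧ p.2 ∈ Z}.encard) :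
    ∃ f : V → V → ℤ,
      (∀ u v : V, f u v = -f v u) ∧
      (∀ u v : V, f u v ≠ 0 → G.Adj u v) ∧
      (∀ v : V, {u : V | f v u ≠ 0}.Finite) ∧
      (∀ v : V, (∑ᶠ u : V, f v u) = (δ v : ℤ) - 1 ∨
        (δ v = 0 ∧ (∑ᶠ u : V, f v u) = 0)) ∧
      ∀ u v : V, |f u v| ≤ (k : ℤ) := by
  classical
  let : G.LocallyFinite := fun v => (hlf v).fintype
  have hδ : G.IsSparse k δ := fun Z => by
    have := hsparse Z
    rw [G.encard_border_eq_sum Z] at this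
    exact_mod_cast this
  obtain ⟨f, hf, hdefect⟩ := SimpleGraph.exists_isBoundedFlow_of_forall_finset
    (fun v d => d = δ v - 1 ∨ δ v = 0 ∧ d = 0)
    (SimpleGraph.exists_isBoundedFlow_defect_eq_on_finset hδ)
  refine ⟨f, hf.antisymm, hf.adj_of_ne_zero, fun v => (hlf v).subset (hf.adj_of_ne_zero v),
    fun v => ?_, hf.abs_le⟩
  rw [hf.finsum_eq_defect v]
  exact hdefect v
end
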